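/- Let S be a commutative semiring and B an S-bisemialgebra which is S-cogenerated as an S-semimodule, i.e., the functionals in B* = Hom_S(B, S) separate points of B (if f(b) = f(b') for all f ∈ B*, then b = b'). Then t ∈ B* is a left integral on B (i.e., Σ b_1·t(b_2) = t(b)·1_B for all b ∈ B) if and only if f * t = f(1_B)·t for every f ∈ B*, where * denotes the convolution product (f * g)(b) = Σ f(b_1)·g(b_2). -/
import Mathlib


/-!
STATEMENT 10: Let `S` be a commutative semiring and `B` an `S`-bisemialgebra
which is `S`-cogenerated as an `S`-semimodule (the functionals in
`B* = Hom_S(B,S)` separate points of `B`).  Then `t ∈ B*` is a left integral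
on `B` (`Σ b₁ · t b₂ = t b • 1` for all `b`) if and only if
`f * t = f 1 • t` for every `f ∈ B*`, where `*` is the convolution product
`(f * g) b = Σ f b₁ · g b₂`.
-/

open TensorProduct

variable (S : Type*) [CommSemiring S] (B : Type*) [Semiring B] [Bialgebra S B]

/-- The convolution product on `B* = Hom_S(B,S)`:
`(f * g) b = Σ f b₁ · g b₂`. -/
noncomputable def convProd (f g : B →ₗ[S] S) : B →ₗ[S] S :=
  LinearMap.mul' S S ∘ₗ TensorProduct.map f g ∘ₗ Coalgebra.comul


lemma convProd_key (f t : B →ₗ[S] S) (x : B ⊗[S] B) :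
    f ((TensorProduct.rid S B) (LinearMap.lTensor B t x)) =
      LinearMap.mul' S S (TensorProduct.map f t x) := by
  induction x using TensorProduct.induction_on with
  | zero => simp
  | tmul a b => simp [mul_comm]
  | add x y hx hy => simp [hx, hy]

theorem left_integral_iff_conv_of_cogenerated
    (hcog : ∀ b b' : B, (∀ f : B →ₗ[S] S, f b = f b') → b = b')
    (t : B →ₗ[S] S) :
    (∀ b : B, (TensorProduct.rid S B)
        (LinearMap.lTensor B t (Coalgebra.comul b)) = t b • (1 : B)) ↔
      (∀ f : B →ₗ[S] S, convProd S B f t = f 1 • t) := by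
  constructor
  · intro h f
    ext b
    have hk := convProd_key S B f t (Coalgebra.comul b)
    simp only [convProd, LinearMap.coe_comp, Function.comp_apply, LinearMap.smul_apply,
      smul_eq_mul]
    rw [← hk, h b, map_smul, smul_eq_mul, mul_comm]
  · intro h b
    apply hcog
    intro f
    have hk := convProd_key S B f t (Coalgebra.comul b)
    have h1 := congrArg (fun g : B →ₗ[S] S => g b) (h f)
    simp only [convProd, LinearMap.coe_comp, Function.comp_apply, LinearMap.smul_apply,
      smul_eq_mul] at h1
    rw [hk, h1, map_smul, smul_eq_mul, mul_comm]
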